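/- Every sequence (α_i)_{i≥1} of nonnegative integers satisfying α_{j+1} α_{j+2} … ≤ α_1 α_2 … lexicographically for all j ≥ 1 and (α_1 − α_{j+1})(α_1 − α_{j+2}) … < α_1 α_2 … lexicographically for all j ≥ 1 contains infinitely many nonzero terms. -/

import Mathlib

/-- `c` is a `q`-expansion: a sequence of nonnegative integers with `c i ≤ q`
(we index from 0, so `c i` stands for the digit `c_{i+1}` of the paper)
such that `∑_{i≥1} c_i q^{-i} = 1`. -/
def IsExpansion (q : ℝ) (c : ℕ → ℕ) : Prop :=
  (∀ i, (c i : ℝ) ≤ q) ∧ ∑' i : ℕ, (c i : ℝ) / q ^ (i + 1) = 1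

/-- The set `𝒰` of univoque numbers: real numbers `q ≥ 1` admitting exactly one
`q`-expansion. -/
def UnivoqueSet : Set ℝ := {q | 1 ≤ q ∧ ∃! c : ℕ → ℕ, IsExpansion q c}

/-- `γ` is the greedy `q`-expansion: for every `n`, `γ n` is the largest
nonnegative integer `k` such that `(∑_{i<n} γ i / q^(i+1)) + k / q^(n+1) ≤ 1`. -/
def IsGreedy (q : ℝ) (γ : ℕ → ℕ) : Prop :=
  ∀ n : ℕ, IsGreatest
    {k : ℕ | (∑ i ∈ Finset.range n, (γ i : ℝ) / q ^ (i + 1)) + (k : ℝ) / q ^ (n + 1) ≤ 1} (γ n)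

/-- `α` is the quasi-greedy `q`-expansion: for every `n`, `α n` is the largest
nonnegative integer `k` such that `(∑_{i<n} α i / q^(i+1)) + k / q^(n+1) < 1`. -/
def IsQuasiGreedy (q : ℝ) (α : ℕ → ℕ) : Prop :=
  ∀ n : ℕ, IsGreatest
    {k : ℕ | (∑ i ∈ Finset.range n, (α i : ℝ) / q ^ (i + 1)) + (k : ℝ) / q ^ (n + 1) < 1} (α n)

/-- Strict lexicographic order on sequences of nonnegative integers. -/
def LexLT (a b : ℕ → ℕ) : Prop := ∃ n : ℕ, (∀ i < n, a i = b i) ∧ a n < b n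

/-- Lexicographic order on sequences of nonnegative integers. -/
def LexLE (a b : ℕ → ℕ) : Prop := LexLT a b ∨ a = b

/-- Strict lexicographic order on finite words of length `n`
(given as functions on the first `n` indices). -/
def WordLT (n : ℕ) (a b : ℕ → ℕ) : Prop := ∃ i < n, (∀ j < i, a j = b j) ∧ a i < b i

theorem not_lexLT_of_forall_le {a b : ℕ → ℕ} (h : ∀ n, b n ≤ a n) : ¬LexLT a b := by
  rintro ⟨n, -, hlt⟩
  exact (h n).not_gt hlt

theorem LexLE.head_le {a b : ℕ → ℕ} (h : LexLE a b) : a 0 ≤ b 0 := by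
  rcases h with ⟨n, heq, hlt⟩ | rfl
  · rcases Nat.eq_zero_or_pos n with rfl | hn
    · exact hlt.le
    · exact (heq 0 hn).le
  · exact le_rfl

theorem le_head_of_shift_lexLE {α : ℕ → ℕ} (h : ∀ j : ℕ, 1 ≤ j → LexLE (fun i => α (i + j)) α)
    (n : ℕ) : α n ≤ α 0 := by
  rcases Nat.eq_zero_or_pos n with rfl | hn
  · exact le_rfl
  · simpa using (h n hn).head_le

/-- A sequence satisfying conditions (23) and (24) has infinitely many
nonzero terms. -/
theorem infinitely_many_nonzero (α : ℕ → ℕ)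
    (h1 : ∀ j : ℕ, 1 ≤ j → LexLE (fun i => α (i + j)) α)
    (h2 : ∀ j : ℕ, 1 ≤ j → LexLT (fun i => α 0 - α (i + j)) α) :
    ∀ N : ℕ, ∃ n ≥ N, α n ≠ 0 := by
  intro N
  by_contra! hzero
  -- beyond `N` the reflected tail is the constant sequence `α 0`, which cannot be below `α`
  refine not_lexLT_of_forall_le (fun n => ?_) (h2 (N + 1) (Nat.le_add_left 1 N))
  rw [hzero (n + (N + 1)) (by omega), Nat.sub_zero]
  exact le_head_of_shift_lexLE h1 n
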